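/- Every strongly connected state machine Petri net marked with exactly one token is live, and every reachable marking also has exactly one token (the total token count is invariant and equal to 1). -/
import Mathlib


variable {P T : Type*}

/-- Transition `t` is enabled at marking `m`. -/
def Enabled (Pre : P → T → ℕ) (m : P → ℕ) (t : T) : Prop := ∀ p, Pre p t ≤ m p

/-- Firing of transition `t` at marking `m`. -/
def Fire (Pre Post : P → T → ℕ) (m : P → ℕ) (t : T) : P → ℕ :=
  fun p => m p + Post p t - Pre p t

/-- `FireSeq Pre Post m σ m'` : the firing sequence `σ` leads from `m` to `m'`. -/
inductive FireSeq (Pre Post : P → T → ℕ) : (P → ℕ) → List T → (P → ℕ) → Prop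
  | nil (m : P → ℕ) : FireSeq Pre Post m [] m
  | cons {m mf : P → ℕ} {t : T} {σ : List T} :
      Enabled Pre m t → FireSeq Pre Post (Fire Pre Post m t) σ mf →
      FireSeq Pre Post m (t :: σ) mf

/-- `m` is reachable from `m₀`. -/
def Reachable (Pre Post : P → T → ℕ) (m₀ m : P → ℕ) : Prop :=
  ∃ σ : List T, FireSeq Pre Post m₀ σ m

/-- Adjacency of the bipartite graph of a Petri net. -/
def SMAdj (Pre Post : P → T → ℕ) : (P ⊕ T) → (P ⊕ T) → Prop
  | Sum.inl p, Sum.inr t => Pre p t = 1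
  | Sum.inr t, Sum.inl p => Post p t = 1
  | _, _ => False

open Finset

open Classical in
/-- The marking with a single token at `p`. -/
noncomputable def SMsingle (p : P) : P → ℕ := fun q => if q = p then 1 else 0

lemma SMsingle_sum [Fintype P] (p : P) : ∑ q, SMsingle p q = 1 := by
  classical
  simp [SMsingle]

lemma SMsingle_one {p q : P} (h : SMsingle p q = 1) : q = p := by
  by_contra hq
  simp [SMsingle, hq] at h

lemma SMeq_single [Fintype P] {f : P → ℕ} (h : ∑ p, f p = 1) : ∃ p, f = SMsingle p := by
  classical
  have hne : ∃ p, f p ≠ 0 := by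
    by_contra hc
    push_neg at hc
    simp [hc] at h
  obtain ⟨p, hp⟩ := hne
  have hle : f p ≤ 1 := h ▸ Finset.single_le_sum (fun i _ => Nat.zero_le _) (mem_univ p)
  have hfp : f p = 1 := le_antisymm hle (Nat.one_le_iff_ne_zero.mpr hp)
  have hsum := Finset.add_sum_erase univ f (mem_univ p)
  have hrest : ∑ q ∈ univ.erase p, f q = 0 := by omega
  refine ⟨p, funext fun q => ?_⟩
  by_cases hq : q = p
  · simp [SMsingle, hq, hfp]
  · have := (Finset.sum_eq_zero_iff.mp hrest) q (by simp [hq])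
    simp [SMsingle, hq, this]

lemma SMfire_single {Pre Post : P → T → ℕ} {t : T} {pi po : P}
    (hpre : (fun p => Pre p t) = SMsingle pi)
    (hpost : (fun p => Post p t) = SMsingle po) :
    Fire Pre Post (SMsingle pi) t = SMsingle po := by
  funext q
  have h1 : Pre q t = SMsingle pi q := congrFun hpre q
  have h2 : Post q t = SMsingle po q := congrFun hpost q
  simp only [Fire, h1, h2]
  omega

lemma SMenabled_single {Pre : P → T → ℕ} {t : T} {pi : P}
    (hpre : (fun p => Pre p t) = SMsingle pi) :
    Enabled Pre (SMsingle pi) t := by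
  intro q
  have h1 : Pre q t = SMsingle pi q := congrFun hpre q
  omega

lemma SMfireseq_append {Pre Post : P → T → ℕ} {m m' m'' : P → ℕ} {σ σ' : List T}
    (h : FireSeq Pre Post m σ m') (h' : FireSeq Pre Post m' σ' m'') :
    FireSeq Pre Post m (σ ++ σ') m'' := by
  induction h with
  | nil m => simpa using h'
  | cons he _ ih => exact FireSeq.cons he (ih h')

lemma SMreachable_trans {Pre Post : P → T → ℕ} {m m' m'' : P → ℕ}
    (h : Reachable Pre Post m m') (h' : Reachable Pre Post m' m'') :
    Reachable Pre Post m m'' := by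
  obtain ⟨σ, hσ⟩ := h
  obtain ⟨σ', hσ'⟩ := h'
  exact ⟨σ ++ σ', SMfireseq_append hσ hσ'⟩

lemma SMinv [Fintype P] {Pre Post : P → T → ℕ}
    (hsm : ∀ t, (∑ p, Pre p t = 1) ∧ (∑ p, Post p t = 1))
    {m m' : P → ℕ} {σ : List T} (h : FireSeq Pre Post m σ m')
    (p : P) (hm : m = SMsingle p) : ∃ p', m' = SMsingle p' := by
  induction h generalizing p with
  | nil m => exact ⟨p, hm⟩
  | @cons m mf t σ he hs ih =>
    obtain ⟨pi, hpi⟩ := SMeq_single (hsm t).1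
    obtain ⟨po, hpo⟩ := SMeq_single (hsm t).2
    have hPit : Pre pi t = 1 := by
      have := congrFun hpi pi
      simp [SMsingle] at this
      exact this
    have hpip : pi = p := by
      have h1 := he pi
      rw [hm, hPit] at h1
      have : SMsingle p pi = 1 :=
        le_antisymm (by by_cases h : pi = p <;> simp [SMsingle, h]) h1
      exact SMsingle_one this
    subst hpip
    have hfire : Fire Pre Post m t = SMsingle po := by
      rw [hm]
      exact SMfire_single hpi hpo
    exact ih po hfire

/-- A strongly connected state machine marked with one token is live, and every
reachable marking has exactly one token. -/
theorem sm_one_token_live [Fintype P] (Pre Post : P → T → ℕ)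
    (hsm : ∀ t, (∑ p, Pre p t = 1) ∧ (∑ p, Post p t = 1))
    (hconn : ∀ a b : P ⊕ T, Relation.ReflTransGen (SMAdj Pre Post) a b)
    (m₀ : P → ℕ) (hm₀ : ∑ p, m₀ p = 1) :
    (∀ m, Reachable Pre Post m₀ m → ∑ p, m p = 1) ∧
    (∀ m, Reachable Pre Post m₀ m → ∀ t : T,
      ∃ m', Reachable Pre Post m m' ∧ Enabled Pre m' t) := by
  classical
  obtain ⟨p₀, hp₀⟩ := SMeq_single hm₀
  have hreach_single : ∀ m, Reachable Pre Post m₀ m → ∃ p, m = SMsingle p := by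
    rintro m ⟨σ, hσ⟩
    exact SMinv hsm hσ p₀ hp₀
  -- marking attached to a node of the bipartite graph
  set Mk : P ⊕ T → P → ℕ := fun a =>
    match a with
    | Sum.inl p => SMsingle p
    | Sum.inr t => fun q => Pre q t with hMk
  -- edges induce reachability
  have hedge : ∀ a b : P ⊕ T, SMAdj Pre Post a b → Reachable Pre Post (Mk a) (Mk b) := by
    rintro (p | t) (p' | t') hab
    · exact absurd hab (by simp [SMAdj])
    · -- p → t' with Pre p t' = 1
      obtain ⟨pi, hpi⟩ := SMeq_single (hsm t').1
      have hab' : Pre p t' = 1 := hab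
      have hp : p = pi := SMsingle_one (by rw [← congrFun hpi p]; exact hab')
      refine ⟨[], ?_⟩
      have : Mk (Sum.inl p) = Mk (Sum.inr t') := by
        simp only [hMk]
        rw [hpi, hp]
      rw [this]
      exact FireSeq.nil _
    · -- t → p' with Post p' t = 1
      obtain ⟨pi, hpi⟩ := SMeq_single (hsm t).1
      obtain ⟨po, hpo⟩ := SMeq_single (hsm t).2
      have hab' : Post p' t = 1 := hab
      have hp : p' = po := SMsingle_one (by rw [← congrFun hpo p']; exact hab')
      refine ⟨[t], ?_⟩
      have hMka : Mk (Sum.inr t) = SMsingle pi := hpi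
      have hMkb : Mk (Sum.inl p') = SMsingle po := by simp only [hMk]; rw [hp]
      rw [hMka, hMkb]
      refine FireSeq.cons (SMenabled_single hpi) ?_
      rw [SMfire_single hpi hpo]
      exact FireSeq.nil _
    · exact absurd hab (by simp [SMAdj])
  have hrtg : ∀ a b : P ⊕ T, Relation.ReflTransGen (SMAdj Pre Post) a b →
      Reachable Pre Post (Mk a) (Mk b) := by
    intro a b h
    induction h with
    | refl => exact ⟨[], FireSeq.nil _⟩
    | tail _ hbc ih => exact SMreachable_trans ih (hedge _ _ hbc)
  constructor
  · intro m hm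
    obtain ⟨p, rfl⟩ := hreach_single m hm
    exact SMsingle_sum p
  · intro m hm t
    obtain ⟨p, rfl⟩ := hreach_single m hm
    refine ⟨Mk (Sum.inr t), hrtg (Sum.inl p) (Sum.inr t) (hconn _ _), ?_⟩
    intro q
    exact le_refl _
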